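/- For n ≥ 1, the code C_p(n) = {(a;b) : w(a;b) ≥ 1 and Σ_i a_i ≡ 0 mod 2} ∪ {(a;b) : w(a;b) = 0} has minimum asymmetric Lee distance (with λ=1) at least 2: any two distinct elements of C_p(n) are at d_{λ=1} at least 2. -/
import Mathlib


open Finset

def ind (p : Prop) [Decidable p] : ℤ := if p then 1 else 0

def aldSym (lam : ℕ) (a b c d : Bool) : ℤ :=
  (1 + lam) * (ind (a = b) + ind (c = d))
    + lam * ind (a = !b ∧ !b = !c ∧ !c = d)
    - 2 * (1 + lam) * ind (a = b ∧ b = c ∧ c = d)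

def ALD (lam n : ℕ) (x y : (Fin n → Bool) × (Fin n → Bool)) : ℤ :=
  ∑ i, aldSym lam (x.1 i) (x.2 i) (y.1 i) (y.2 i)

def wt {n : ℕ} (a b : Fin n → Bool) : ℕ :=
  (Finset.univ.filter fun i => a i ≠ b i).card
def Cp (n : ℕ) : Finset ((Fin n → Bool) × (Fin n → Bool)) :=
  Finset.univ.filter fun x =>
    (1 ≤ wt x.1 x.2 ∧ (Finset.univ.filter fun i => x.1 i = true).card % 2 = 0) ∨
      wt x.1 x.2 = 0

lemma aldSym_nonneg : ∀ a b c d, 0 ≤ aldSym 1 a b c d := by decide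
lemma aldSym_eq_zero : ∀ a b c d, aldSym 1 a b c d = 0 → a = c ∧ b = d := by decide
lemma aldSym_self : ∀ a b, aldSym 1 a b a b = 0 := by decide
lemma aldSym_eq_one : ∀ a b c d, aldSym 1 a b c d = 1 → a ≠ b ∧ c = b ∧ d = a := by decide

theorem Cp_min_ald_two (n : ℕ) (hn : 1 ≤ n)
    (x y : (Fin n → Bool) × (Fin n → Bool))
    (hx : x ∈ Cp n) (hy : y ∈ Cp n) (hxy : x ≠ y) :
    (2 : ℤ) ≤ ALD 1 n x y := by
  classical
  set f : Fin n → ℤ := fun i => aldSym 1 (x.1 i) (x.2 i) (y.1 i) (y.2 i) with hf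
  set S : Finset (Fin n) :=
    Finset.univ.filter (fun i => ¬ (x.1 i = y.1 i ∧ x.2 i = y.2 i)) with hS
  have hout : ∀ i ∈ Finset.univ, i ∉ S → f i = 0 := by
    intro i _ hi
    simp only [hS, Finset.mem_filter, Finset.mem_univ, true_and, not_not] at hi
    show aldSym 1 (x.1 i) (x.2 i) (y.1 i) (y.2 i) = 0
    rw [hi.1, hi.2]; exact aldSym_self _ _
  have hALD : ALD 1 n x y = ∑ i ∈ S, f i := by
    rw [ALD, ← Finset.sum_subset (Finset.subset_univ S) hout]
  have hpos : ∀ i ∈ S, 1 ≤ f i := by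
    intro i hi
    have h0 := aldSym_nonneg (x.1 i) (x.2 i) (y.1 i) (y.2 i)
    simp only [hS, Finset.mem_filter, Finset.mem_univ, true_and] at hi
    rcases eq_or_lt_of_le h0 with h | h
    · exact absurd (aldSym_eq_zero _ _ _ _ h.symm) hi
    · exact h
  have hSne : S.Nonempty := by
    rw [Finset.nonempty_iff_ne_empty]
    intro h
    apply hxy
    have : ∀ i, x.1 i = y.1 i ∧ x.2 i = y.2 i := by
      intro i
      by_contra hc
      have : i ∈ S := by rw [hS]; exact Finset.mem_filter.mpr ⟨Finset.mem_univ _, hc⟩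
      simp [h] at this
    exact Prod.ext (funext fun i => (this i).1) (funext fun i => (this i).2)
  rcases lt_or_ge S.card 2 with hc2 | hc2
  · -- S.card = 1
    have hc1 : S.card = 1 := by
      have := Finset.card_pos.mpr hSne; omega
    obtain ⟨i0, hi0⟩ := Finset.card_eq_one.mp hc1
    have hsum : ALD 1 n x y = f i0 := by rw [hALD, hi0, Finset.sum_singleton]
    have h1 : 1 ≤ f i0 := hpos i0 (by simp [hi0])
    rcases lt_or_ge (f i0) 2 with hlt | hge
    · -- f i0 = 1 : flip case, parity contradiction
      exfalso
      have hone : f i0 = 1 := by omega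
      obtain ⟨hab, hcb, hda⟩ := aldSym_eq_one _ _ _ _ hone
      have heq : ∀ i, i ≠ i0 → x.1 i = y.1 i ∧ x.2 i = y.2 i := by
        intro i hne
        by_contra hc
        have : i ∈ S := by rw [hS]; exact Finset.mem_filter.mpr ⟨Finset.mem_univ _, hc⟩
        rw [hi0] at this
        exact hne (Finset.mem_singleton.mp this)
      -- both have wt ≥ 1
      have hwx : 1 ≤ wt x.1 x.2 :=
        Finset.card_pos.mpr ⟨i0, by simp [wt, hab]⟩
      have hwy : 1 ≤ wt y.1 y.2 := by
        refine Finset.card_pos.mpr ⟨i0, ?_⟩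
        simp only [wt, Finset.mem_filter, Finset.mem_univ, true_and]
        rw [hcb, hda]
        exact fun h => hab h.symm
      simp only [Cp, Finset.mem_filter, Finset.mem_univ, true_and] at hx hy
      have hpx : (Finset.univ.filter fun i => x.1 i = true).card % 2 = 0 := by
        rcases hx with ⟨_, h⟩ | h
        · exact h
        · omega
      have hpy : (Finset.univ.filter fun i => y.1 i = true).card % 2 = 0 := by
        rcases hy with ⟨_, h⟩ | h
        · exact h
        · omega
      -- count sums
      have hcx : (Finset.univ.filter fun i => x.1 i = true).card
          = ∑ i, (if x.1 i = true then 1 else 0) := Finset.card_filter _ _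
      have hcy : (Finset.univ.filter fun i => y.1 i = true).card
          = ∑ i, (if y.1 i = true then 1 else 0) := Finset.card_filter _ _
      set g : Fin n → ℕ := fun i =>
        (if x.1 i = true then 1 else 0) + (if y.1 i = true then 1 else 0) with hg
      have hsumg : (Finset.univ.filter fun i => x.1 i = true).card
          + (Finset.univ.filter fun i => y.1 i = true).card = ∑ i, g i := by
        rw [hcx, hcy, ← Finset.sum_add_distrib]
      have hsplit : ∑ i, g i = g i0 + ∑ i ∈ Finset.univ.erase i0, g i :=
        (Finset.add_sum_erase _ g (Finset.mem_univ i0)).symm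
      have hgi0 : g i0 = 1 := by
        have h2 : y.1 i0 = x.2 i0 := hcb
        cases hx1 : x.1 i0 <;> cases hx2 : x.2 i0
        · exact absurd (hx1.trans hx2.symm) hab
        · simp [hg, h2, hx1, hx2]
        · simp [hg, h2, hx1, hx2]
        · exact absurd (hx1.trans hx2.symm) hab
      have herase : ∑ i ∈ Finset.univ.erase i0, g i
          = 2 * ∑ i ∈ Finset.univ.erase i0, (if x.1 i = true then 1 else 0) := by
        rw [Finset.mul_sum]
        refine Finset.sum_congr rfl fun i hi => ?_
        have hne : i ≠ i0 := (Finset.mem_erase.mp hi).1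
        have hxy1 := (heq i hne).1
        simp only [hg, ← hxy1]
        by_cases hxi : x.1 i = true <;> simp [hxi]
      omega
    · omega
  · -- S.card ≥ 2
    rw [hALD]
    calc (2 : ℤ) ≤ S.card := by exact_mod_cast hc2
    _ = ∑ _i ∈ S, (1 : ℤ) := by simp
    _ ≤ ∑ i ∈ S, f i := Finset.sum_le_sum hpos
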